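/- arXiv:2305.12996 — 3 statements merged into one kernel-verified Lean document; each statement's English description precedes it below -/
import Mathlib

section
/- Let Π be a probability measure on ℝ^d, let L ∈ ℕ, and for each level l ∈ {0,…,L} let m_l < n_l be natural numbers, let X⁰_l = (x_{l,1},…,x_{l,m_l}) be fixed points in ℝ^d, and let k₀^l : ℝ^d × ℝ^d → ℝ be a measurable kernel such that for every y ∈ ℝ^d the function x ↦ k₀^l(x,y) is Π-integrable with ∫ k₀^l(x,y) dΠ(x) = 0. Suppose the m_l × m_l matrix K_l with entries (K_l)_{ij} = k₀^l(x_{l,i}, x_{l,j}) is invertible and 𝟙ᵀ K_l⁻¹ 𝟙 ≠ 0, where 𝟙 is the all-ones vector. Let f₋₁ := 0 and f_0,…,f_L : ℝ^d → ℝ be measurable with each difference f_l − f_{l−1} Π-integrable. Let X¹_l = (x_{l,m_l+1},…,x_{l,n_l}) be random points, each with marginal distribution Π and such that k₀^l(x_{l,i},x_{l,j}) and (f_l − f_{l−1})(x_{l,i}) are integrable for i > m_l. Define a_l = 𝟙ᵀ K_l⁻¹ g_l(X⁰_l) / (𝟙ᵀ K_l⁻¹ 𝟙) where g_l := f_l −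 f_{l−1} and g_l(X⁰_l) denotes the vector of evaluations of g_l at the points of X⁰_l. Then the standard multilevel control functional estimator Σ_{l=0}^{L} (n_l − m_l)^{-1} 𝟙ᵀ { g_l(X¹_l) − k₀^l(X¹_l, X⁰_l) K_l⁻¹ [ g_l(X⁰_l) − a_l 𝟙 ] } has expectation equal to ∫ f_L dΠ, where k₀^l(X¹_l, X⁰_l) is the (n_l − m_l) × m_l matrix with entries k₀^l(x_{l,m_l+i}, x_{l,j}). -/
/-!
Each level estimator averages `n_l - m_l` copies of `h_l(X) := g_l(X) - ∑_j k₀^l(X, x_{l,j}) c_j`,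
where `X ~ Π` and the weights `c = K_l⁻¹ (g_l(X⁰_l) - a_l 𝟙)` depend only on the fixed points.
Since `∫ k₀^l(x, y) dΠ(x) = 0`, the control variate has mean zero, so each level is an unbiased
estimator of `∫ g_l dΠ`, and these integrals telescope to `∫ f_L dΠ`.
-/

open MeasureTheory Matrix Finset

theorem Finset.sum_range_succ_sub_prev {G : Type*} [AddCommGroup G] (f : ℕ → G) (L : ℕ) :
    ∑ l ∈ range (L + 1), (f l - if l = 0 then 0 else f (l - 1)) = f L := by
  induction L with
  | zero => simp
  | succ L ih => rw [sum_range_succ, ih]; simp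

namespace MeasureTheory

variable {E Ω : Type*} [MeasurableSpace E] [MeasurableSpace Ω] {μ : Measure E} {P : Measure Ω}

theorem integral_comp_of_map_eq {X : Ω → E} (hX : AEMeasurable X P) (hlaw : P.map X = μ)
    {F : E → ℝ} (hF : AEStronglyMeasurable F μ) : ∫ ω, F (X ω) ∂P = ∫ x, F x ∂μ := by
  subst hlaw
  exact (integral_map hX hF).symm

theorem integrable_comp_of_map_eq {X : Ω → E} (hX : AEMeasurable X P) (hlaw : P.map X = μ)
    {F : E → ℝ} (hF : Integrable F μ) : Integrable (fun ω => F (X ω)) P := by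
  subst hlaw
  exact hF.comp_aemeasurable hX

theorem integral_sub_sum_mul_of_integral_eq_zero {ι : Type*} [Fintype ι] {g : E → ℝ}
    (hg : Integrable g μ) {k : ι → E → ℝ} (hk : ∀ j, Integrable (k j) μ)
    (hk_zero : ∀ j, ∫ x, k j x ∂μ = 0) (c : ι → ℝ) :
    ∫ x, (g x - ∑ j, k j x * c j) ∂μ = ∫ x, g x ∂μ := by
  have hkc : ∀ j ∈ (univ : Finset ι), Integrable (fun x => k j x * c j) μ :=
    fun j _ => (hk j).mul_const _
  rw [integral_sub hg (integrable_finsetSum _ hkc), integral_finsetSum _ hkc]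
  simp [integral_mul_const, hk_zero]

theorem integral_inv_mul_sum_comp_of_map_eq {N : ℕ} (hN : N ≠ 0) {X : Fin N → Ω → E}
    (hX : ∀ i, AEMeasurable (X i) P) (hlaw : ∀ i, P.map (X i) = μ)
    {F : E → ℝ} (hF : Integrable F μ) :
    ∫ ω, (N : ℝ)⁻¹ * ∑ i, F (X i ω) ∂P = ∫ x, F x ∂μ := by
  rw [integral_const_mul,
    integral_finsetSum _ fun i _ => integrable_comp_of_map_eq (hX i) (hlaw i) hF]
  simp only [integral_comp_of_map_eq (hX _) (hlaw _) hF.aestronglyMeasurable, sum_const,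
    card_univ, Fintype.card_fin, nsmul_eq_mul]
  field_simp

end MeasureTheory

theorem multilevel_control_functional_unbiased_general
    {d : ℕ} (μ : Measure (Fin d → ℝ))
    {Ω : Type*} [MeasurableSpace Ω] (P : Measure Ω)
    (L : ℕ) (m n : ℕ → ℕ) (hmn : ∀ l ≤ L, m l < n l)
    (X0 : (l : ℕ) → Fin (m l) → (Fin d → ℝ))
    (k₀ : ℕ → (Fin d → ℝ) → (Fin d → ℝ) → ℝ)
    (hk_int : ∀ l ≤ L, ∀ y, Integrable (fun x => k₀ l x y) μ)
    (hk_zero : ∀ l ≤ L, ∀ y, ∫ x, k₀ l x y ∂μ = 0)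
    (K : (l : ℕ) → Matrix (Fin (m l)) (Fin (m l)) ℝ)
    (f : ℕ → (Fin d → ℝ) → ℝ)
    -- g l is the increment f_l - f_{l-1}, with the convention f_{-1} := 0
    (g : ℕ → (Fin d → ℝ) → ℝ)
    (hg : ∀ l, g l = fun x => f l x - if l = 0 then 0 else f (l - 1) x)
    (hg_int : ∀ l ≤ L, Integrable (g l) μ)
    (X1 : (l : ℕ) → Fin (n l - m l) → Ω → (Fin d → ℝ))
    (hX1_meas : ∀ l ≤ L, ∀ i, Measurable (X1 l i))
    (hX1_law : ∀ l ≤ L, ∀ i, Measure.map (X1 l i) P = μ)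
    (a : ℕ → ℝ) :
    ∫ ω, ∑ l ∈ Finset.range (L + 1),
        ((n l : ℝ) - m l)⁻¹ *
          ∑ i : Fin (n l - m l),
            (g l (X1 l i ω) -
              ∑ j : Fin (m l),
                k₀ l (X1 l i ω) (X0 l j) * ((K l)⁻¹ *ᵥ fun j => g l (X0 l j) - a l) j) ∂P
      = ∫ x, f L x ∂μ := by
  set c := fun l => (K l)⁻¹ *ᵥ fun j => g l (X0 l j) - a l
  set h := fun l x => g l x - ∑ j, k₀ l x (X0 l j) * c l j
  have hh_int : ∀ l ≤ L, Integrable (h l) μ := fun l hl =>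
    (hg_int l hl).sub (integrable_finsetSum _ fun j _ => (hk_int l hl _).mul_const _)
  have hlevel_int : ∀ l ∈ range (L + 1),
      Integrable (fun ω => ((n l : ℝ) - m l)⁻¹ * ∑ i, h l (X1 l i ω)) P := by
    intro l hl
    rw [mem_range_succ_iff] at hl
    exact (integrable_finsetSum _ fun i _ => integrable_comp_of_map_eq
      (hX1_meas l hl i).aemeasurable (hX1_law l hl i) (hh_int l hl)).const_mul _
  have hlevel : ∀ l ∈ range (L + 1),
      ∫ ω, ((n l : ℝ) - m l)⁻¹ * ∑ i, h l (X1 l i ω) ∂P = ∫ x, g l x ∂μ := by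
    intro l hl
    rw [mem_range_succ_iff] at hl
    rw [← Nat.cast_sub (hmn l hl).le, integral_inv_mul_sum_comp_of_map_eq
      (Nat.sub_ne_zero_of_lt (hmn l hl)) (fun i => (hX1_meas l hl i).aemeasurable)
      (hX1_law l hl) (hh_int l hl)]
    exact integral_sub_sum_mul_of_integral_eq_zero (hg_int l hl) (fun j => hk_int l hl _)
      (fun j => hk_zero l hl _) _
  change ∫ ω, ∑ l ∈ range (L + 1), ((n l : ℝ) - m l)⁻¹ * ∑ i, h l (X1 l i ω) ∂P = _
  rw [integral_finsetSum _ hlevel_int, sum_congr rfl hlevel,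
    ← integral_finsetSum _ fun l hl => hg_int l (mem_range_succ_iff.1 hl)]
  simp only [hg, sum_range_succ_sub_prev]

/-- Unbiasedness of the standard multilevel control functional estimator. -/
theorem multilevel_control_functional_unbiased
    {d : ℕ} (μ : Measure (Fin d → ℝ)) [IsProbabilityMeasure μ]
    {Ω : Type*} [MeasurableSpace Ω] (P : Measure Ω) [IsProbabilityMeasure P]
    (L : ℕ) (m n : ℕ → ℕ) (hmn : ∀ l ≤ L, m l < n l)
    (X0 : (l : ℕ) → Fin (m l) → (Fin d → ℝ))
    (k₀ : ℕ → (Fin d → ℝ) → (Fin d → ℝ) → ℝ)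
    (hk_meas : ∀ l ≤ L, ∀ y, Measurable fun x => k₀ l x y)
    (hk_int : ∀ l ≤ L, ∀ y, Integrable (fun x => k₀ l x y) μ)
    (hk_zero : ∀ l ≤ L, ∀ y, ∫ x, k₀ l x y ∂μ = 0)
    (K : (l : ℕ) → Matrix (Fin (m l)) (Fin (m l)) ℝ)
    (hK : ∀ l ≤ L, K l = Matrix.of fun i j => k₀ l (X0 l i) (X0 l j))
    (hKunit : ∀ l ≤ L, IsUnit (K l))
    (hone : ∀ l ≤ L, (1 : Fin (m l) → ℝ) ⬝ᵥ ((K l)⁻¹ *ᵥ (1 : Fin (m l) → ℝ)) ≠ 0)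
    (f : ℕ → (Fin d → ℝ) → ℝ)
    (hf_meas : ∀ l ≤ L, Measurable (f l))
    -- g l is the increment f_l - f_{l-1}, with the convention f_{-1} := 0
    (g : ℕ → (Fin d → ℝ) → ℝ)
    (hg : ∀ l, g l = fun x => f l x - if l = 0 then 0 else f (l - 1) x)
    (hg_int : ∀ l ≤ L, Integrable (g l) μ)
    (X1 : (l : ℕ) → Fin (n l - m l) → Ω → (Fin d → ℝ))
    (hX1_meas : ∀ l ≤ L, ∀ i, Measurable (X1 l i))
    (hX1_law : ∀ l ≤ L, ∀ i, Measure.map (X1 l i) P = μ)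
    (hk_int' : ∀ l ≤ L, ∀ i j, Integrable (fun ω => k₀ l (X1 l i ω) (X0 l j)) P)
    (hg_int' : ∀ l ≤ L, ∀ i, Integrable (fun ω => g l (X1 l i ω)) P)
    (a : ℕ → ℝ)
    (ha : ∀ l ≤ L, a l =
        ((1 : Fin (m l) → ℝ) ⬝ᵥ ((K l)⁻¹ *ᵥ fun j => g l (X0 l j))) /
        ((1 : Fin (m l) → ℝ) ⬝ᵥ ((K l)⁻¹ *ᵥ (1 : Fin (m l) → ℝ)))) :
    ∫ ω, ∑ l ∈ Finset.range (L + 1),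
        ((n l : ℝ) - m l)⁻¹ *
          ∑ i : Fin (n l - m l),
            (g l (X1 l i ω) -
              ∑ j : Fin (m l),
                k₀ l (X1 l i ω) (X0 l j) * ((K l)⁻¹ *ᵥ fun j => g l (X0 l j) - a l) j) ∂P
      = ∫ x, f L x ∂μ :=
  multilevel_control_functional_unbiased_general μ P L m n hmn X0 k₀ hk_int hk_zero K f g hg hg_int
    X1 hX1_meas hX1_law a
end

section
/- Let Π be a probability measure on ℝ^d, let m < n, let X⁰ = (x_1,…,x_m) be fixed points in ℝ^d, and let k₀ : ℝ^d × ℝ^d → ℝ be a measurable kernel such that for every y ∈ ℝ^d the function x ↦ k₀(x,y) is Π-integrable with ∫ k₀(x,y) dΠ(x) = 0. Suppose the m × m matrix K with entries K_{ij} = k₀(x_i, x_j) is invertible and 𝟙ᵀ K⁻¹ 𝟙 ≠ 0. Let f : ℝ^d → ℝ be Π-integrable, and let X¹ = (x_{m+1},…,x_n) be random points, each with marginal distribution Π and such that k₀(x_{m+i}, x_j) and f(x_{m+i}) are integrable. Define a = 𝟙ᵀ K⁻¹ f(X⁰) / (𝟙ᵀ K⁻¹ 𝟙), where f(X⁰)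 is the vector of evaluations of f at x_1,…,x_m. Then the standard control functional estimator (n − m)^{-1} 𝟙ᵀ { f(X¹) − k₀(X¹, X⁰) K⁻¹ [ f(X⁰) − a 𝟙 ] } has expectation equal to ∫ f dΠ, where k₀(X¹, X⁰) is the (n−m) × m matrix with entries k₀(x_{m+i}, x_j). -/
/-!
Each summand of the estimator is `f(x) - ∑ⱼ k₀(x, xⱼ) cⱼ` evaluated at a point `x ~ Π`, for a
vector `c` that depends only on the fixed points `X⁰`. Since `∫ k₀(x, y) dΠ(x) = 0` for every `y`,
the control variate `∑ⱼ k₀(x, xⱼ) cⱼ` has mean zero whatever `c` is, so every summand has mean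
`∫ f dΠ`, and so does their average.
-/

open MeasureTheory Matrix Finset

section

variable {α Ω E : Type*} [MeasurableSpace α] [MeasurableSpace Ω]
  [NormedAddCommGroup E] [NormedSpace ℝ E] {μ : Measure α} {P : Measure Ω}

theorem integral_comp_of_map_eq {X : Ω → α} (hX : Measurable X) (hlaw : P.map X = μ)
    {g : α → E} (hg : AEStronglyMeasurable g μ) :
    ∫ ω, g (X ω) ∂P = ∫ x, g x ∂μ := by
  subst hlaw
  exact (integral_map hX.aemeasurable hg).symm

theorem integral_inv_card_mul_sum_of_integral_eq {ι : Type*} [Fintype ι] [Nonempty ι]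
    {g : ι → Ω → ℝ} (hg : ∀ i, Integrable (g i) P) {c : ℝ} (hc : ∀ i, ∫ ω, g i ω ∂P = c) :
    ∫ ω, (Fintype.card ι : ℝ)⁻¹ * ∑ i, g i ω ∂P = c := by
  rw [integral_const_mul, integral_finsetSum _ fun i _ => hg i]
  simp only [hc, sum_const, card_univ, nsmul_eq_mul]
  rw [← mul_assoc, inv_mul_cancel₀ (by exact_mod_cast Fintype.card_ne_zero), one_mul]

end

section SteinKernel

variable {α Ω ι : Type*} [MeasurableSpace Ω] [Fintype ι]
  {P : Measure Ω} {k₀ : α → α → ℝ} {X : Ω → α} {y : ι → α}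

theorem integrable_sub_sum_stein_kernel_mul {f : α → ℝ} (hf_int : Integrable (fun ω => f (X ω)) P)
    (hk_int : ∀ j, Integrable (fun ω => k₀ (X ω) (y j)) P) (c : ι → ℝ) :
    Integrable (fun ω => f (X ω) - ∑ j, k₀ (X ω) (y j) * c j) P :=
  hf_int.sub (integrable_finsetSum _ fun j _ => (hk_int j).mul_const _)

variable [MeasurableSpace α] {μ : Measure α}

theorem integral_sum_stein_kernel_mul_eq_zero (hk_meas : ∀ y, Measurable fun x => k₀ x y)
    (hk_zero : ∀ y, ∫ x, k₀ x y ∂μ = 0) (hX : Measurable X) (hlaw : P.map X = μ)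
    (hk_int : ∀ j, Integrable (fun ω => k₀ (X ω) (y j)) P) (c : ι → ℝ) :
    ∫ ω, ∑ j, k₀ (X ω) (y j) * c j ∂P = 0 := by
  rw [integral_finsetSum _ fun j _ => (hk_int j).mul_const _]
  refine sum_eq_zero fun j _ => ?_
  rw [integral_mul_const,
    integral_comp_of_map_eq hX hlaw (hk_meas (y j)).aestronglyMeasurable, hk_zero, zero_mul]

theorem integral_sub_sum_stein_kernel_mul {f : α → ℝ} (hf_meas : Measurable f)
    (hk_meas : ∀ y, Measurable fun x => k₀ x y) (hk_zero : ∀ y, ∫ x, k₀ x y ∂μ = 0)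
    (hX : Measurable X) (hlaw : P.map X = μ) (hf_int : Integrable (fun ω => f (X ω)) P)
    (hk_int : ∀ j, Integrable (fun ω => k₀ (X ω) (y j)) P) (c : ι → ℝ) :
    ∫ ω, (f (X ω) - ∑ j, k₀ (X ω) (y j) * c j) ∂P = ∫ x, f x ∂μ := by
  rw [integral_sub hf_int (integrable_finsetSum _ fun j _ => (hk_int j).mul_const _),
    integral_sum_stein_kernel_mul_eq_zero hk_meas hk_zero hX hlaw hk_int,
    integral_comp_of_map_eq hX hlaw hf_meas.aestronglyMeasurable, sub_zero]

end SteinKernel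

theorem control_functional_unbiased_general
    {d : ℕ} (μ : Measure (Fin d → ℝ))
    {Ω : Type*} [MeasurableSpace Ω] (P : Measure Ω)
    (m n : ℕ) (hmn : m < n)
    (X0 : Fin m → (Fin d → ℝ))
    (k₀ : (Fin d → ℝ) → (Fin d → ℝ) → ℝ)
    (hk_meas : ∀ y, Measurable fun x => k₀ x y)
    (hk_zero : ∀ y, ∫ x, k₀ x y ∂μ = 0)
    (K : Matrix (Fin m) (Fin m) ℝ)
    (f : (Fin d → ℝ) → ℝ)
    (hf_meas : Measurable f)
    (X1 : Fin (n - m) → Ω → (Fin d → ℝ))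
    (hX1_meas : ∀ i, Measurable (X1 i))
    (hX1_law : ∀ i, Measure.map (X1 i) P = μ)
    (hk_int' : ∀ i j, Integrable (fun ω => k₀ (X1 i ω) (X0 j)) P)
    (hf_int' : ∀ i, Integrable (fun ω => f (X1 i ω)) P)
    (a : ℝ) :
    ∫ ω, ((n : ℝ) - m)⁻¹ *
        ∑ i : Fin (n - m),
          (f (X1 i ω) -
            ∑ j : Fin m, k₀ (X1 i ω) (X0 j) * (K⁻¹ *ᵥ fun j => f (X0 j) - a) j) ∂P
      = ∫ x, f x ∂μ := by
  have : Nonempty (Fin (n - m)) := ⟨⟨0, Nat.sub_pos_of_lt hmn⟩⟩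
  have hcard : ((n : ℝ) - m) = Fintype.card (Fin (n - m)) := by
    rw [Fintype.card_fin, Nat.cast_sub hmn.le]
  rw [hcard]
  exact integral_inv_card_mul_sum_of_integral_eq
    (fun i => integrable_sub_sum_stein_kernel_mul (hf_int' i) (hk_int' i) _)
    (fun i => integral_sub_sum_stein_kernel_mul hf_meas hk_meas hk_zero (hX1_meas i)
      (hX1_law i) (hf_int' i) (hk_int' i) _)

/-- Unbiasedness of the standard control functional estimator. -/
theorem control_functional_unbiased
    {d : ℕ} (μ : Measure (Fin d → ℝ)) [IsProbabilityMeasure μ]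
    {Ω : Type*} [MeasurableSpace Ω] (P : Measure Ω) [IsProbabilityMeasure P]
    (m n : ℕ) (hmn : m < n)
    (X0 : Fin m → (Fin d → ℝ))
    (k₀ : (Fin d → ℝ) → (Fin d → ℝ) → ℝ)
    (hk_meas : ∀ y, Measurable fun x => k₀ x y)
    (hk_int : ∀ y, Integrable (fun x => k₀ x y) μ)
    (hk_zero : ∀ y, ∫ x, k₀ x y ∂μ = 0)
    (K : Matrix (Fin m) (Fin m) ℝ)
    (hK : K = Matrix.of fun i j => k₀ (X0 i) (X0 j))
    (hKunit : IsUnit K)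
    (hone : (1 : Fin m → ℝ) ⬝ᵥ (K⁻¹ *ᵥ (1 : Fin m → ℝ)) ≠ 0)
    (f : (Fin d → ℝ) → ℝ)
    (hf_meas : Measurable f) (hf_int : Integrable f μ)
    (X1 : Fin (n - m) → Ω → (Fin d → ℝ))
    (hX1_meas : ∀ i, Measurable (X1 i))
    (hX1_law : ∀ i, Measure.map (X1 i) P = μ)
    (hk_int' : ∀ i j, Integrable (fun ω => k₀ (X1 i ω) (X0 j)) P)
    (hf_int' : ∀ i, Integrable (fun ω => f (X1 i ω)) P)
    (a : ℝ)
    (ha : a = ((1 : Fin m → ℝ) ⬝ᵥ (K⁻¹ *ᵥ fun j => f (X0 j))) /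
              ((1 : Fin m → ℝ) ⬝ᵥ (K⁻¹ *ᵥ (1 : Fin m → ℝ)))) :
    ∫ ω, ((n : ℝ) - m)⁻¹ *
        ∑ i : Fin (n - m),
          (f (X1 i ω) -
            ∑ j : Fin m, k₀ (X1 i ω) (X0 j) * (K⁻¹ *ᵥ fun j => f (X0 j) - a) j) ∂P
      = ∫ x, f x ∂μ :=
  control_functional_unbiased_general μ P m n hmn X0 k₀ hk_meas hk_zero K f hf_meas X1 hX1_meas
    hX1_law hk_int' hf_int' a
end

section
/- Let Q = [a_1,b_1] × ⋯ × [a_d,b_d] ⊂ ℝ^d be a closed box with a_i < b_i, let π : ℝ^d → ℝ be continuously differentiable with π(x) > 0 for all x ∈ Q, and let k : ℝ^d × ℝ^d → ℝ be twice continuously differentiable. Fix y ∈ Q and suppose that for every x ∈ ∂Q one has π(x) k(x,y) = 0 and π(x) (∇_{x'} k)(x, x')|_{x'=y} = 0 (the gradient of k in its second argument evaluated at (x,y)). Define the Stein kernel k₀(x,y) = ∇_x · ∇_{x'} k(x,y) + ⟨∇ log π(x), ∇_{x'} k(x,y)⟩ + ⟨∇ log π(y), ∇_x k(x,y)⟩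 + ⟨∇ log π(x), ∇ log π(y)⟩ k(x,y), where ∇_x denotes the gradient in the first argument, ∇_{x'} the gradient in the second argument, and ∇_x · ∇_{x'} k = Σ_{i=1}^{d} ∂²k/∂x_i ∂x'_i. Then ∫_Q k₀(x,y) π(x) dx = 0. -/
open MeasureTheory Finset

/-!
Write `g_y(x) = ∇_{x'} k(x, y) + k(x, y) ∇ log π(y)`. Expanding `div (π g_y)` by the product
rule gives exactly `k₀(x, y) π(x)`, so the integral is the flux of `π g_y` through `∂Q` by the
divergence theorem, and this flux vanishes because `π g_y = 0` on `∂Q` by the boundary conditions.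
-/

open Set in
theorem mem_frontier_Icc_of_apply_eq {ι : Type*} [Finite ι] {a b x : ι → ℝ}
    (hx : x ∈ Icc a b) {i : ι} (hi : x i = a i ∨ x i = b i) : x ∈ frontier (Icc a b) := by
  rw [isClosed_Icc.frontier_eq]
  refine ⟨hx, fun hint => ?_⟩
  rw [← pi_univ_Icc, interior_pi_set finite_univ] at hint
  have hxi := hint i (mem_univ i)
  rcases hi with h | h <;> simp [h] at hxi

open Set in
theorem integral_divergence_eq_zero_of_eq_zero_on_frontier {E : Type*} [NormedAddCommGroup E]
    [NormedSpace ℝ E] [CompleteSpace E] {d : ℕ} {a b : Fin d → ℝ} (hle : a ≤ b)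
    {f : Fin d → (Fin d → ℝ) → E} (hf : ∀ i, ContDiff ℝ 1 (f i))
    (hf₀ : ∀ x ∈ frontier (Icc a b), ∀ i, f i x = 0) :
    ∫ x in Icc a b, ∑ i, fderiv ℝ (f i) x (Pi.single i 1) = 0 := by
  cases d with
  | zero => simp
  | succ n =>
  have hface : ∀ i, ∀ c, (c = a i ∨ c = b i) →
      ∫ x in Icc (a ∘ i.succAbove) (b ∘ i.succAbove), f i (i.insertNth c x) = 0 := by
    intro i c hc
    refine setIntegral_eq_zero_of_forall_eq_zero fun x hx => hf₀ _ ?_ i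
    refine mem_frontier_Icc_of_apply_eq (Fin.insertNth_mem_Icc.2 ⟨?_, hx⟩) (i := i) ?_
    · rcases hc with rfl | rfl
      exacts [⟨le_rfl, hle i⟩, ⟨hle i, le_rfl⟩]
    · simpa using hc
  have hint : IntegrableOn (fun x => ∑ i, fderiv ℝ (f i) x (Pi.single i 1)) (Icc a b) :=
    (continuous_finsetSum _ fun i _ =>
      ((hf i).continuous_fderiv one_ne_zero).clm_apply continuous_const).integrableOn_Icc
  rw [integral_divergence_of_hasFDerivAt_off_countable' a b hle f (fun i => fderiv ℝ (f i)) ∅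
    countable_empty (fun i => (hf i).continuous.continuousOn)
    (fun x _ i => ((hf i).differentiable one_ne_zero x).hasFDerivAt) hint]
  exact Finset.sum_eq_zero fun i _ => by
    rw [hface i _ (Or.inr rfl), hface i _ (Or.inl rfl), sub_zero]

section SteinField

variable {E : Type*} [NormedAddCommGroup E] [NormedSpace ℝ E]

/-- The `v`-component of the vector field `x ↦ ∇_{x'} k(x, y) + k(x, y) ∇ log π(y)`. -/
noncomputable def steinField (π : E → ℝ) (k : E → E → ℝ) (y v x : E) : ℝ :=
  fderiv ℝ (k x) y v + fderiv ℝ π y v / π y * k x y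

theorem contDiff_steinField {π : E → ℝ} {k : E → E → ℝ} {m n : WithTop ℕ∞}
    (hk : ContDiff ℝ m (Function.uncurry k)) (hnm : n + 1 ≤ m) (y v : E) :
    ContDiff ℝ n (steinField π k y v) :=
  (hk.fderiv_apply contDiff_const contDiff_const hnm).add <| contDiff_const.mul <|
    (hk.of_le (le_self_add.trans hnm)).comp (contDiff_id.prodMk contDiff_const)

theorem fderiv_mul_steinField {π : E → ℝ} {k : E → E → ℝ} {x y v : E}
    (hπ : DifferentiableAt ℝ π x) (hπx : π x ≠ 0)
    (hky : DifferentiableAt ℝ (fun z => fderiv ℝ (k z) y v) x)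
    (hkx : DifferentiableAt ℝ (fun z => k z y) x) :
    fderiv ℝ (fun z => π z * steinField π k y v z) x v =
      (fderiv ℝ (fun z => fderiv ℝ (k z) y v) x v
        + fderiv ℝ π x v / π x * fderiv ℝ (k x) y v
        + fderiv ℝ π y v / π y * fderiv ℝ (fun z => k z y) x v
        + fderiv ℝ π x v / π x * (fderiv ℝ π y v / π y) * k x y) * π x := by
  have hkx' := hkx.const_mul (fderiv ℝ π y v / π y)
  unfold steinField
  rw [fderiv_fun_mul hπ (hky.fun_add hkx'), fderiv_fun_add hky hkx', fderiv_const_mul hkx]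
  simp only [add_apply, smul_apply, smul_eq_mul]
  field_simp
  ring

end SteinField

theorem stein_kernel_mean_zero_on_box_general
    {d : ℕ} (a b : Fin d → ℝ) (hab : ∀ i, a i < b i)
    (π : (Fin d → ℝ) → ℝ) (hπ : ContDiff ℝ 1 π)
    (hπ_pos : ∀ x ∈ Set.Icc a b, 0 < π x)
    (k : (Fin d → ℝ) → (Fin d → ℝ) → ℝ)
    (hk : ContDiff ℝ 2 (Function.uncurry k))
    (y : Fin d → ℝ)
    (h_bdry₁ : ∀ x ∈ frontier (Set.Icc a b), π x * k x y = 0)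
    (h_bdry₂ : ∀ x ∈ frontier (Set.Icc a b), ∀ i : Fin d,
        π x * fderiv ℝ (k x) y (Pi.single i 1) = 0) :
    ∫ x in Set.Icc a b,
        ((∑ i : Fin d,
            fderiv ℝ (fun z => fderiv ℝ (k z) y (Pi.single i 1)) x (Pi.single i 1)) +
          (∑ i : Fin d,
            (fderiv ℝ π x (Pi.single i 1) / π x) * fderiv ℝ (k x) y (Pi.single i 1)) +
          (∑ i : Fin d,
            (fderiv ℝ π y (Pi.single i 1) / π y) * fderiv ℝ (fun z => k z y) x (Pi.single i 1)) +
          (∑ i : Fin d,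
            (fderiv ℝ π x (Pi.single i 1) / π x) * (fderiv ℝ π y (Pi.single i 1) / π y)) * k x y) *
        π x
      = 0 := by
  have hflux := integral_divergence_eq_zero_of_eq_zero_on_frontier (fun i => (hab i).le)
    (f := fun i x => π x * steinField π k y (Pi.single i 1) x)
    (fun i => hπ.mul (contDiff_steinField hk le_rfl _ _)) fun x hx i => by
      rw [steinField, mul_add, h_bdry₂ x hx i, mul_left_comm, h_bdry₁ x hx, mul_zero, zero_add]
  rw [← hflux]
  refine setIntegral_congr_fun measurableSet_Icc fun x hx => ?_
  have hky : ∀ v, DifferentiableAt ℝ (fun z => fderiv ℝ (k z) y v) x := fun v =>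
    (hk.fderiv_apply contDiff_const contDiff_const le_rfl).differentiable one_ne_zero x
  have hkx : DifferentiableAt ℝ (fun z => k z y) x :=
    (hk.comp (contDiff_id.prodMk contDiff_const)).differentiable two_ne_zero x
  simp only [fderiv_mul_steinField (hπ.differentiable one_ne_zero x) (hπ_pos x hx).ne' (hky _)
    hkx, ← Finset.sum_mul, Finset.sum_add_distrib]

/-- The Stein kernel `k₀` obtained from a `C²` base kernel `k` and a positive `C¹`
density `π` via the Langevin Stein operator has `Π`-mean zero over a closed box,
provided the relevant boundary terms vanish.  Gradients are spelled out via `fderiv`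
applied to the coordinate directions `Pi.single i 1`. -/
theorem stein_kernel_mean_zero_on_box
    {d : ℕ} (a b : Fin d → ℝ) (hab : ∀ i, a i < b i)
    (π : (Fin d → ℝ) → ℝ) (hπ : ContDiff ℝ 1 π)
    (hπ_pos : ∀ x ∈ Set.Icc a b, 0 < π x)
    (k : (Fin d → ℝ) → (Fin d → ℝ) → ℝ)
    (hk : ContDiff ℝ 2 (Function.uncurry k))
    (y : Fin d → ℝ) (hy : y ∈ Set.Icc a b)
    (h_bdry₁ : ∀ x ∈ frontier (Set.Icc a b), π x * k x y = 0)
    (h_bdry₂ : ∀ x ∈ frontier (Set.Icc a b), ∀ i : Fin d,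
        π x * fderiv ℝ (k x) y (Pi.single i 1) = 0) :
    ∫ x in Set.Icc a b,
        ((∑ i : Fin d,
            fderiv ℝ (fun z => fderiv ℝ (k z) y (Pi.single i 1)) x (Pi.single i 1)) +
          (∑ i : Fin d,
            (fderiv ℝ π x (Pi.single i 1) / π x) * fderiv ℝ (k x) y (Pi.single i 1)) +
          (∑ i : Fin d,
            (fderiv ℝ π y (Pi.single i 1) / π y) * fderiv ℝ (fun z => k z y) x (Pi.single i 1)) +
          (∑ i : Fin d,
            (fderiv ℝ π x (Pi.single i 1) / π x) * (fderiv ℝ π y (Pi.single i 1) / π y)) * k x y) *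
        π x
      = 0 :=
  stein_kernel_mean_zero_on_box_general a b hab π hπ hπ_pos k hk y h_bdry₁ h_bdry₂
end
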